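/- In ℂ[α,β,γ], let J_2 be the ideal (α² + β − 8, α(β + 8) + γ, αγ). Then J_2 equals the intersection (α − 4, β + 8, γ) ∩ (α², β − 8, γ + 16α) ∩ (α + 4, β + 8, γ), and consequently there is a ring isomorphism ℂ[α,β,γ]/J_2 ≅ ℂ[α,β,γ]/(α−4, β+8, γ) × ℂ[α,β,γ]/(α², β−8, γ+16α) × ℂ[α,β,γ]/(α+4, β+8, γ). -/

import Mathlib

open MvPolynomial

noncomputable section

abbrev R3 : Type := MvPolynomial (Fin 3) ℂ

def al : R3 := X 0
def be : R3 := X 1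
def ga : R3 := X 2

def J2 : Ideal R3 := Ideal.span {al ^ 2 + be - 8, al * (be + 8) + ga, al * ga}

def I1 : Ideal R3 := Ideal.span {al - 4, be + 8, ga}
def I2 : Ideal R3 := Ideal.span {al ^ 2, be - 8, ga + 16 * al}
def I3 : Ideal R3 := Ideal.span {al + 4, be + 8, ga}

/-!
Modulo `β - 8 + α²` and `γ - α³ + 16α`, every ideal in sight is generated by one polynomial in
`α`: `J₂` by `α²(α - 4)(α + 4)`, and the three components by its pairwise coprime factors
`α - 4`, `α²`, `α + 4`. So the decomposition is the Chinese remainder theorem in `ℂ[α]`, lifted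
along the curve `β = 8 - α²`, `γ = α³ - 16α`.
-/

section

variable {R : Type*} [CommRing R]

theorem Ideal.span_triple_eq_of_dvd_sub {x y y' z z' : R} (hy : x ∣ y' - y) (hz : x ∣ z' - z) :
    Ideal.span {x, y', z'} = Ideal.span {x, y, z} := by
  obtain ⟨u, hu⟩ := hy
  obtain ⟨v, hv⟩ := hz
  obtain rfl : y' = y + x * u := eq_add_of_sub_eq' hu
  obtain rfl : z' = z + x * v := eq_add_of_sub_eq' hv
  have gen {a b c : R} : a ∈ Ideal.span {a, b, c} ∧ b ∈ Ideal.span {a, b, c} ∧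
      c ∈ Ideal.span {a, b, c} :=
    ⟨Ideal.subset_span (by simp), Ideal.subset_span (by simp), Ideal.subset_span (by simp)⟩
  apply le_antisymm <;>
    simp only [Ideal.span_le, Set.insert_subset_iff, Set.singleton_subset_iff, SetLike.mem_coe]
  · obtain ⟨hx, hy, hz⟩ := gen (a := x) (b := y) (c := z)
    exact ⟨hx, add_mem hy (Ideal.mul_mem_right u _ hx), add_mem hz (Ideal.mul_mem_right v _ hx)⟩
  · obtain ⟨hx, hy, hz⟩ := gen (a := x) (b := y + x * u) (c := z + x * v)
    refine ⟨hx, ?_, ?_⟩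
    · simpa using sub_mem hy (Ideal.mul_mem_right u _ hx)
    · simpa using sub_mem hz (Ideal.mul_mem_right v _ hx)

theorem IsCoprime.sup_sup {I J : Ideal R} (h : IsCoprime I J) (K : Ideal R) :
    IsCoprime (I ⊔ K) (J ⊔ K) :=
  Ideal.isCoprime_iff_sup_eq.2 <| eq_top_iff.2 <| h.sup_eq ▸ sup_le_sup le_sup_left le_sup_left

theorem Ideal.sup_inf_sup_of_isCoprime {I J : Ideal R} (h : IsCoprime I J) (K : Ideal R) :
    (I ⊔ K) ⊓ (J ⊔ K) = I * J ⊔ K := by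
  apply le_antisymm
  · rw [← Ideal.mul_eq_inf_of_coprime (h.sup_sup K).sup_eq, Ideal.sup_mul, Ideal.mul_sup,
      Ideal.mul_sup]
    exact sup_le (sup_le le_sup_left (Ideal.mul_le_right.trans le_sup_right))
      (sup_le (Ideal.mul_le_left.trans le_sup_right) (Ideal.mul_le_left.trans le_sup_right))
  · exact sup_le
      (le_inf (Ideal.mul_le_left.trans le_sup_left) (Ideal.mul_le_right.trans le_sup_left))
      (le_inf le_sup_right le_sup_right)

theorem isCoprime_of_sub_eq_algebraMap {K : Type*} [Field K] [Algebra K R] {x y : R} (c : K)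
    (hc : c ≠ 0) (h : x - y = algebraMap K R c) : IsCoprime x y :=
  ⟨algebraMap K R c⁻¹, -algebraMap K R c⁻¹, by
    rw [neg_mul, ← sub_eq_add_neg, ← mul_sub, h, ← map_mul, inv_mul_cancel₀ hc, map_one]⟩

end

def curveIdeal : Ideal R3 := Ideal.span {al ^ 2 + be - 8, ga - al ^ 3 + 16 * al}

def onCurve (f : R3) : Ideal R3 := Ideal.span {f, al ^ 2 + be - 8, ga - al ^ 3 + 16 * al}

theorem onCurve_eq_sup (f : R3) : onCurve f = Ideal.span {f} ⊔ curveIdeal :=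
  Ideal.span_insert _ _

theorem onCurve_inf_onCurve {f g : R3} (h : IsCoprime f g) :
    onCurve f ⊓ onCurve g = onCurve (f * g) := by
  rw [onCurve_eq_sup, onCurve_eq_sup, onCurve_eq_sup, Ideal.sup_inf_sup_of_isCoprime
    ((Ideal.isCoprime_span_singleton_iff f g).2 h), Ideal.span_singleton_mul_span_singleton]

theorem isCoprime_onCurve {f g : R3} (h : IsCoprime f g) : IsCoprime (onCurve f) (onCurve g) := by
  rw [onCurve_eq_sup, onCurve_eq_sup]
  exact ((Ideal.isCoprime_span_singleton_iff f g).2 h).sup_sup _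

theorem I1_eq_onCurve : I1 = onCurve (al - 4) :=
  Ideal.span_triple_eq_of_dvd_sub ⟨-(al + 4), by ring⟩ ⟨al ^ 2 + 4 * al, by ring⟩

theorem I2_eq_onCurve : I2 = onCurve (al ^ 2) :=
  Ideal.span_triple_eq_of_dvd_sub ⟨-1, by ring⟩ ⟨al, by ring⟩

theorem I3_eq_onCurve : I3 = onCurve (al + 4) :=
  Ideal.span_triple_eq_of_dvd_sub ⟨4 - al, by ring⟩ ⟨al ^ 2 - 4 * al, by ring⟩

-- With `b`, `c` the two curve equations, `J₂ = (b, c + α b, α c + α²(α - 4)(α + 4))`.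
theorem J2_eq_onCurve : J2 = onCurve ((al - 4) * (al ^ 2 * (al + 4))) := by
  have pivot_b := Ideal.span_triple_eq_of_dvd_sub (x := al ^ 2 + be - 8)
    (y' := al * (be + 8) + ga) (y := ga - al ^ 3 + 16 * al) (z' := al * ga) (z := al * ga)
    ⟨al, by ring⟩ ⟨0, by ring⟩
  have pivot_c := Ideal.span_triple_eq_of_dvd_sub (x := ga - al ^ 3 + 16 * al)
    (y' := al ^ 2 + be - 8) (y := al ^ 2 + be - 8) (z' := al * ga)
    (z := (al - 4) * (al ^ 2 * (al + 4))) ⟨0, by ring⟩ ⟨al, by ring⟩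
  rw [J2, pivot_b, Set.insert_comm, pivot_c, onCurve, Set.pair_comm, Set.insert_comm,
    Set.pair_comm]

theorem isCoprime_al_al_add_four : IsCoprime al (al + 4) :=
  isCoprime_of_sub_eq_algebraMap (-4 : ℂ) (by norm_num) (by rw [map_neg, map_ofNat]; ring)

theorem isCoprime_al_sub_four_al : IsCoprime (al - 4) al :=
  isCoprime_of_sub_eq_algebraMap (-4 : ℂ) (by norm_num) (by rw [map_neg, map_ofNat]; ring)

theorem isCoprime_al_sub_four_al_add_four : IsCoprime (al - 4) (al + 4) :=
  isCoprime_of_sub_eq_algebraMap (-8 : ℂ) (by norm_num) (by rw [map_neg, map_ofNat]; ring)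

theorem stmt8 :
    J2 = I1 ⊓ I2 ⊓ I3 ∧
    Nonempty ((R3 ⧸ J2) ≃+* (R3 ⧸ I1) × (R3 ⧸ I2) × (R3 ⧸ I3)) := by
  have coprime_2_3 : IsCoprime (al ^ 2) (al + 4) := isCoprime_al_al_add_four.pow_left
  have coprime_1_23 : IsCoprime (al - 4) (al ^ 2 * (al + 4)) :=
    isCoprime_al_sub_four_al.pow_right.mul_right isCoprime_al_sub_four_al_add_four
  have h23 : I2 ⊓ I3 = onCurve (al ^ 2 * (al + 4)) := by
    rw [I2_eq_onCurve, I3_eq_onCurve, onCurve_inf_onCurve coprime_2_3]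
  have hJ : J2 = I1 ⊓ (I2 ⊓ I3) := by
    rw [h23, I1_eq_onCurve, onCurve_inf_onCurve coprime_1_23, J2_eq_onCurve]
  have hI23 : IsCoprime I2 I3 := by
    rw [I2_eq_onCurve, I3_eq_onCurve]
    exact isCoprime_onCurve coprime_2_3
  have hI1_23 : IsCoprime I1 (I2 ⊓ I3) := by
    rw [h23, I1_eq_onCurve]
    exact isCoprime_onCurve coprime_1_23
  exact ⟨hJ.trans (inf_assoc _ _ _).symm, ⟨(Ideal.quotEquivOfEq hJ).trans <|
    (Ideal.quotientInfEquivQuotientProd I1 _ hI1_23).trans <|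
      (RingEquiv.refl _).prodCongr (Ideal.quotientInfEquivQuotientProd I2 I3 hI23)⟩⟩
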